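/- arXiv:0709.4178 — 3 statements merged into one kernel-verified Lean document; each statement's English description precedes it below -/
import Mathlib

section
/- Let f : [0,1]^ℕ → [0,1] be coordinate-wise nondecreasing and measurable, and let Δ_{i,j}^∞ f be the centering of f in the i-th binary digit of coordinate j (as above). Then for each j, Σ_{i=1}^∞ E((Δ_{i,j}^∞ f)^2) ≤ (1/2) E[ f(X^∞ | y_j = 1) − f(X^∞ | y_j = 0) ], where f(X^∞ | y_j = t) denotes f with the j-th coordinate replaced by t. -/
/-!
Freezing every coordinate but the `j`-th leaves a nondecreasing section `g : [0,1] → [0,1]`, and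
by independence the `n`-th digit influence is the average over the other coordinates of
`∫₀¹ (g(y with digit n set to 1) - g(y with digit n set to 0))² dy`. Both modified points lie in
`[y - 2⁻ⁿ, y + 2⁻ⁿ] ∩ [0,1]`, so the increment is at most `G(y + 2⁻ⁿ) - G(y - 2⁻ⁿ)` for the
extension `G` of `g` by constants, and its square is at most that times `g 1 - g 0`. The integral
of the shifted difference collapses to two windows of width `2·2⁻ⁿ` around the endpoints, whence
the bound `2·2⁻ⁿ·(g 1 - g 0)² ≤ 2·2⁻ⁿ·(g 1 - g 0)`, and `∑_{n ≥ 1} ¼·2·2⁻ⁿ = ½`.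
-/

open MeasureTheory ProbabilityTheory

/-- The `i`-th binary digit of `y` (for `i ≥ 1`): `b_i(y) = ⌊y·2^i⌋ mod 2`. -/
noncomputable def binDigit (i : ℕ) (y : ℝ) : ℝ := if Odd ⌊y * 2 ^ i⌋ then 1 else 0

/-- `y` with its `i`-th binary digit forced to `ε ∈ {0,1}`. -/
noncomputable def setBinDigit (i : ℕ) (ε : ℝ) (y : ℝ) : ℝ := y + (ε - binDigit i y) / 2 ^ i

open Set Function

lemma measurable_binDigit (n : ℕ) : Measurable (binDigit n) := by
  have hfloor : Measurable fun y : ℝ => ⌊y * 2 ^ n⌋ := (measurable_id.mul_const _).floor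
  exact Measurable.ite (hfloor (Set.to_countable {m : ℤ | Odd m}).measurableSet)
    measurable_const measurable_const

lemma measurable_setBinDigit (n : ℕ) (ε : ℝ) : Measurable (setBinDigit n ε) :=
  measurable_id.add ((measurable_const.sub (measurable_binDigit n)).div_const _)

lemma binDigit_nonneg (n : ℕ) (y : ℝ) : 0 ≤ binDigit n y := by
  unfold binDigit; split_ifs <;> norm_num

lemma binDigit_le_one (n : ℕ) (y : ℝ) : binDigit n y ≤ 1 := by
  unfold binDigit; split_ifs <;> norm_num

lemma setBinDigit_one_eq (n : ℕ) (y : ℝ) :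
    setBinDigit n 1 y = setBinDigit n 0 y + (2 ^ n)⁻¹ := by
  simp only [setBinDigit]; ring

lemma sub_le_setBinDigit_zero (n : ℕ) (y : ℝ) : y - (2 ^ n)⁻¹ ≤ setBinDigit n 0 y := by
  have := binDigit_le_one n y
  rw [setBinDigit, zero_sub, neg_div, ← sub_eq_add_neg, div_eq_mul_inv]
  gcongr
  nlinarith [show (0 : ℝ) < (2 ^ n)⁻¹ by positivity]

lemma setBinDigit_one_le_add (n : ℕ) (y : ℝ) : setBinDigit n 1 y ≤ y + (2 ^ n)⁻¹ := by
  have := binDigit_nonneg n y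
  rw [setBinDigit, div_eq_mul_inv]
  gcongr
  nlinarith [show (0 : ℝ) < (2 ^ n)⁻¹ by positivity]

lemma setBinDigit_zero_nonneg (n : ℕ) {y : ℝ} (hy : 0 ≤ y) : 0 ≤ setBinDigit n 0 y := by
  unfold setBinDigit binDigit
  split_ifs with hodd
  · have hm : (1 : ℤ) ≤ ⌊y * 2 ^ n⌋ := by
      have := Int.floor_nonneg.mpr (by positivity : 0 ≤ y * 2 ^ n)
      obtain ⟨k, hk⟩ := hodd
      omega
    have : (1 : ℝ) ≤ ⌊y * 2 ^ n⌋ := by exact_mod_cast hm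
    rw [zero_sub, neg_div, ← sub_eq_add_neg, sub_nonneg, div_le_iff₀ (by positivity)]
    linarith [Int.floor_le (y * 2 ^ n)]
  · simpa using hy

lemma setBinDigit_one_le_one {n : ℕ} (hn : n ≠ 0) {y : ℝ} (hy : y < 1) :
    setBinDigit n 1 y ≤ 1 := by
  unfold setBinDigit binDigit
  split_ifs with hodd
  · simpa using hy.le
  · -- an even `⌊y 2ⁿ⌋` below the even number `2ⁿ` is at most `2ⁿ - 2`
    have hlt : ⌊y * 2 ^ n⌋ < 2 ^ n :=
      Int.floor_lt.mpr (by push_cast; nlinarith [pow_pos (two_pos (α := ℝ)) n])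
    have hle : ⌊y * 2 ^ n⌋ + 2 ≤ 2 ^ n := by
      obtain ⟨k, hk⟩ := Int.not_odd_iff_even.mp hodd
      obtain ⟨l, hl⟩ := Int.even_pow.mpr ⟨even_two, hn⟩
      omega
    have : y * 2 ^ n + 1 ≤ 2 ^ n := by
      have : ((⌊y * 2 ^ n⌋ + 2 : ℤ) : ℝ) ≤ ((2 ^ n : ℤ) : ℝ) := by exact_mod_cast hle
      push_cast at this
      linarith [Int.lt_floor_add_one (y * 2 ^ n)]
    rw [sub_zero, ← le_sub_iff_add_le', div_le_iff₀ (by positivity)]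
    linarith

lemma setBinDigit_mem_Icc {n : ℕ} (hn : n ≠ 0) {y : ℝ} (hy : y ∈ Ico (0 : ℝ) 1) :
    setBinDigit n 0 y ∈ Icc (0 : ℝ) 1 ∧ setBinDigit n 1 y ∈ Icc (0 : ℝ) 1 := by
  have h0 := setBinDigit_zero_nonneg n hy.1
  have h1 := setBinDigit_one_le_one hn hy.2
  have hs01 := setBinDigit_one_eq n y
  exact ⟨⟨h0, by linarith [inv_pos.2 (pow_pos (two_pos (α := ℝ)) n)]⟩,
    ⟨by linarith [inv_pos.2 (pow_pos (two_pos (α := ℝ)) n)], h1⟩⟩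

lemma Monotone.intervalIntegral_sub_shift_le {G : ℝ → ℝ} (hG : Monotone G) (a b : ℝ) {h : ℝ}
    (hh : 0 ≤ h) :
    ∫ y in a..b, (G (y + h) - G (y - h)) ≤ 2 * h * (G (b + h) - G (a - h)) := by
  have hint : ∀ c d, IntervalIntegrable G volume c d := fun _ _ => hG.intervalIntegrable
  have hwidth : ∀ c, (c + h) - (c - h) = 2 * h := fun c => by ring
  have upper : ∫ y in (b - h)..(b + h), G y ≤ 2 * h * G (b + h) := by
    refine (intervalIntegral.integral_mono_on (by linarith) (hint _ _) intervalIntegrable_const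
      fun y hy => hG hy.2).trans_eq ?_
    rw [intervalIntegral.integral_const, hwidth, smul_eq_mul]
  have lower : 2 * h * G (a - h) ≤ ∫ y in (a - h)..(a + h), G y := by
    refine le_of_eq_of_le ?_ (intervalIntegral.integral_mono_on (by linarith)
      intervalIntegrable_const (hint _ _) fun y hy => hG hy.1)
    rw [intervalIntegral.integral_const, hwidth, smul_eq_mul]
  have hshift : ∀ c, Monotone fun y => G (y + c) := fun c x y hxy => hG (by linarith)
  rw [intervalIntegral.integral_sub (hshift h).intervalIntegrable
      (by simpa only [sub_eq_add_neg] using (hshift (-h)).intervalIntegrable),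
    intervalIntegral.integral_comp_add_right, intervalIntegral.integral_comp_sub_right,
    intervalIntegral.integral_interval_sub_interval_comm' (hint _ _) (hint _ _) (hint _ _)]
  linarith

lemma integral_sq_setBinDigit_sub_le {g : ℝ → ℝ} (hg : MonotoneOn g (Icc 0 1)) {n : ℕ}
    (hn : n ≠ 0) :
    ∫ y in Icc (0 : ℝ) 1, (g (setBinDigit n 1 y) - g (setBinDigit n 0 y)) ^ 2
      ≤ 2 * (2 ^ n)⁻¹ * (g 1 - g 0) ^ 2 := by
  set h : ℝ := (2 ^ n)⁻¹
  have hh : 0 ≤ h := by positivity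
  set G : ℝ → ℝ := fun t => g (projIcc 0 1 zero_le_one t)
  have hG : Monotone G := fun x y hxy =>
    hg (projIcc 0 1 zero_le_one x).2 (projIcc 0 1 zero_le_one y).2 (monotone_projIcc _ hxy)
  have hGg : ∀ t ∈ Icc (0 : ℝ) 1, G t = g t := fun t ht => by
    simp only [G, projIcc_of_mem _ ht]
  have hg01 : g 0 ≤ g 1 := hg (left_mem_Icc.2 zero_le_one) (right_mem_Icc.2 zero_le_one) zero_le_one
  have pointwise : ∀ y ∈ Ico (0 : ℝ) 1, (g (setBinDigit n 1 y) - g (setBinDigit n 0 y)) ^ 2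
      ≤ (g 1 - g 0) * (G (y + h) - G (y - h)) := by
    intro y hy
    obtain ⟨hs0, hs1⟩ := setBinDigit_mem_Icc hn hy
    have hincr : 0 ≤ g (setBinDigit n 1 y) - g (setBinDigit n 0 y) :=
      sub_nonneg.2 (hg hs0 hs1 (by linarith [setBinDigit_one_eq n y]))
    have hle_ends : g (setBinDigit n 1 y) - g (setBinDigit n 0 y) ≤ g 1 - g 0 := by
      linarith [hg hs1 (right_mem_Icc.2 zero_le_one) hs1.2,
        hg (left_mem_Icc.2 zero_le_one) hs0 hs0.1]
    have hle_shift : g (setBinDigit n 1 y) - g (setBinDigit n 0 y) ≤ G (y + h) - G (y - h) := by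
      rw [← hGg _ hs0, ← hGg _ hs1]
      linarith [hG (setBinDigit_one_le_add n y), hG (sub_le_setBinDigit_zero n y)]
    rw [sq]
    exact mul_le_mul hle_ends hle_shift hincr (hincr.trans hle_ends)
  have hup : Monotone fun y => G (y + h) := fun x y hxy => hG (by linarith)
  have hdown : Monotone fun y => G (y - h) := fun x y hxy => hG (by linarith)
  have hint : IntegrableOn (fun y => (g 1 - g 0) * (G (y + h) - G (y - h))) (Icc 0 1) :=
    ((hup.locallyIntegrable.integrableOn_isCompact isCompact_Icc).sub
      (hdown.locallyIntegrable.integrableOn_isCompact isCompact_Icc)).const_mul _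
  calc ∫ y in Icc (0 : ℝ) 1, (g (setBinDigit n 1 y) - g (setBinDigit n 0 y)) ^ 2
      = ∫ y in Ico (0 : ℝ) 1, (g (setBinDigit n 1 y) - g (setBinDigit n 0 y)) ^ 2 :=
        integral_Icc_eq_integral_Ico
    _ ≤ ∫ y in Ico (0 : ℝ) 1, (g 1 - g 0) * (G (y + h) - G (y - h)) :=
        integral_mono_of_nonneg (ae_of_all _ fun _ => sq_nonneg _)
          (hint.mono_set Ico_subset_Icc_self)
          ((ae_restrict_iff' measurableSet_Ico).2 (ae_of_all _ pointwise))
    _ = (g 1 - g 0) * ∫ y in (0 : ℝ)..1, (G (y + h) - G (y - h)) := by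
        rw [← integral_Icc_eq_integral_Ico, integral_Icc_eq_integral_Ioc,
          ← intervalIntegral.integral_of_le zero_le_one, intervalIntegral.integral_const_mul]
    _ ≤ (g 1 - g 0) * (2 * h * (G (1 + h) - G (0 - h))) :=
        mul_le_mul_of_nonneg_left (hG.intervalIntegral_sub_shift_le 0 1 hh) (sub_nonneg.2 hg01)
    _ = 2 * h * (g 1 - g 0) ^ 2 := by
        simp only [G, projIcc_of_right_le _ (le_add_of_nonneg_right hh),
          projIcc_of_le_left _ (sub_nonpos.2 hh)]
        ring

namespace ProbabilityTheory

variable {ι β : Type*} [DecidableEq ι] [MeasurableSpace β] {μ : Measure (ι → β)}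

lemma iIndepFun.indepFun_update_apply (h : iIndepFun (fun i (u : ι → β) => u i) μ) (j : ι)
    (c : β) : IndepFun (fun u => update u j c) (fun u => u j) μ := by
  rw [IndepFun_iff_Indep]
  let m : ι → MeasurableSpace (ι → β) := fun i => MeasurableSpace.comap (fun u => u i) ‹_›
  have hm : ∀ i, m i ≤ MeasurableSpace.pi := fun i => (measurable_pi_apply i).comap_le
  refine indep_of_indep_of_le (indep_iSup_of_disjoint hm ((iIndepFun_iff_iIndep _ _ μ).1 h)
    (disjoint_compl_left (a := ({j} : Set ι)))) ?_ (le_biSup m (mem_singleton j))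
  -- `update u j c` only reads the coordinates of `u` other than `j`
  rw [← measurable_iff_comap_le]
  refine @measurable_pi_iff _ _ _ (⨆ i ∈ ({j} : Set ι)ᶜ, m i) _ _ |>.2 fun i => ?_
  by_cases hi : i = j
  · simp only [hi, update_self]
    exact @measurable_const β (ι → β) _ (⨆ i ∈ ({j} : Set ι)ᶜ, m i) c
  · simp only [update_of_ne hi]
    exact Measurable.of_comap_le (le_biSup m hi)

theorem iIndepFun.integral_eq_integral_integral_update [IsProbabilityMeasure μ]
    (h : iIndepFun (fun i (u : ι → β) => u i) μ) (j : ι) {F : (ι → β) → ℝ}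
    (hF : Measurable F) (hFi : Integrable F μ) :
    ∫ u, F u ∂μ = ∫ u, ∫ y, F (update u j y) ∂(μ.map (· j)) ∂μ := by
  obtain ⟨u₀⟩ := nonempty_of_isProbabilityMeasure μ
  set X : (ι → β) → ι → β := fun u => update u j (u₀ j)
  have hX : Measurable X := measurable_update_left
  have hY : Measurable fun u : ι → β => u j := measurable_pi_apply j
  set Φ : (ι → β) × β → ℝ := fun p => F (update p.1 j p.2)
  have hΦ : Measurable Φ := hF.comp measurable_update'
  have hΦX : ∀ u y, Φ (X u, y) = F (update u j y) := fun u y => by simp [Φ, X]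
  have hmap : μ.map (fun u => (X u, u j)) = (μ.map X).prod (μ.map (· j)) :=
    (indepFun_iff_map_prod_eq_prod_map_map hX.aemeasurable hY.aemeasurable).1
      (h.indepFun_update_apply j _)
  have hpair : AEMeasurable (fun u => (X u, u j)) μ := (hX.prodMk hY).aemeasurable
  have hΦi : Integrable Φ ((μ.map X).prod (μ.map (· j))) := by
    rw [← hmap, integrable_map_measure hΦ.aestronglyMeasurable hpair]
    simpa [comp_def, hΦX] using hFi
  calc ∫ u, F u ∂μ = ∫ u, Φ (X u, u j) ∂μ := by simp [hΦX]
    _ = ∫ p, Φ p ∂((μ.map X).prod (μ.map (· j))) := by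
        rw [← hmap, integral_map hpair hΦ.aestronglyMeasurable]
    _ = ∫ v, ∫ y, Φ (v, y) ∂(μ.map (· j)) ∂(μ.map X) := integral_prod Φ hΦi
    _ = ∫ u, ∫ y, F (update u j y) ∂(μ.map (· j)) ∂μ := by
        rw [integral_map hX.aemeasurable
          (hΦ.stronglyMeasurable.integral_prod_right' (ν := μ.map (· j))).aestronglyMeasurable]
        simp only [hΦX]

end ProbabilityTheory

lemma MonotoneOn.update {ι : Type*} [DecidableEq ι] {α : ι → Type*} [∀ i, Preorder (α i)]
    {β : Type*} [Preorder β] {s : ∀ i, Set (α i)} {f : (∀ i, α i) → β}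
    (hf : MonotoneOn f (univ.pi s)) {u : ∀ i, α i} (hu : u ∈ univ.pi s) (j : ι) :
    MonotoneOn (fun t => f (update u j t)) (s j) := fun _ ha _ hb hab =>
  hf ((update_mem_pi_iff_of_mem hu).2 fun _ => ha) ((update_mem_pi_iff_of_mem hu).2 fun _ => hb)
    (update_le_update_iff'.2 hab)

lemma integral_sq_update_setBinDigit_sub_le {ι : Type*} [DecidableEq ι] {μ : Measure (ι → ℝ)}
    [IsProbabilityMeasure μ] (hindep : iIndepFun (fun i (u : ι → ℝ) => u i) μ) {j : ι}
    (hmarg : μ.map (· j) = volume.restrict (Icc 0 1))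
    (hae : ∀ᵐ u ∂μ, u ∈ univ.pi fun _ => Icc (0 : ℝ) 1) {f : (ι → ℝ) → ℝ}
    (hfmeas : Measurable f) (hrange : ∀ x, f x ∈ Icc (0 : ℝ) 1)
    (hmono : MonotoneOn f (univ.pi fun _ => Icc 0 1)) {n : ℕ} (hn : n ≠ 0) :
    ∫ u, (f (update u j (setBinDigit n 1 (u j))) - f (update u j (setBinDigit n 0 (u j)))) ^ 2 ∂μ
      ≤ 2 * (2 ^ n)⁻¹ * ∫ u, (f (update u j 1) - f (update u j 0)) ∂μ := by
  have hdiff : ∀ x y, |f x - f y| ≤ 1 := fun x y => abs_sub_le_iff.2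
    ⟨by linarith [(hrange x).2, (hrange y).1], by linarith [(hrange x).1, (hrange y).2]⟩
  have hmeas : ∀ φ : ℝ → ℝ, Measurable φ →
      Measurable fun u : ι → ℝ => f (update u j (φ (u j))) := fun φ hφ =>
    hfmeas.comp (measurable_update'.comp (measurable_id.prodMk (hφ.comp (measurable_pi_apply j))))
  have hF : Measurable fun u : ι → ℝ => (f (update u j (setBinDigit n 1 (u j)))
      - f (update u j (setBinDigit n 0 (u j)))) ^ 2 :=
    ((hmeas _ (measurable_setBinDigit n 1)).sub (hmeas _ (measurable_setBinDigit n 0))).pow_const 2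
  have hFi : Integrable (fun u : ι → ℝ => (f (update u j (setBinDigit n 1 (u j)))
      - f (update u j (setBinDigit n 0 (u j)))) ^ 2) μ :=
    .of_bound hF.aestronglyMeasurable 1 (ae_of_all _ fun u => by
      rw [Real.norm_eq_abs, abs_pow, sq_le_one_iff₀ (abs_nonneg _)]; exact hdiff _ _)
  have hRi : Integrable
      (fun u : ι → ℝ => 2 * (2 ^ n)⁻¹ * (f (update u j 1) - f (update u j 0))) μ :=
    (Integrable.of_bound
      ((hmeas _ measurable_const).sub (hmeas _ measurable_const)).aestronglyMeasurable 1
      (ae_of_all _ fun u => hdiff _ _)).const_mul _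
  rw [hindep.integral_eq_integral_integral_update j hF hFi, hmarg, ← integral_const_mul]
  simp only [update_idem, update_self]
  refine integral_mono_of_nonneg (ae_of_all _ fun u => integral_nonneg fun y => sq_nonneg _) hRi ?_
  filter_upwards [hae] with u hu
  have hd0 : 0 ≤ f (update u j 1) - f (update u j 0) := sub_nonneg.2 <|
    hmono.update hu j (left_mem_Icc.2 zero_le_one) (right_mem_Icc.2 zero_le_one) zero_le_one
  have hd1 : f (update u j 1) - f (update u j 0) ≤ 1 := (abs_le.1 (hdiff _ _)).2
  calc _ ≤ 2 * (2 ^ n)⁻¹ * (f (update u j 1) - f (update u j 0)) ^ 2 :=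
        integral_sq_setBinDigit_sub_le (hmono.update hu j) hn
    _ ≤ 2 * (2 ^ n)⁻¹ * (f (update u j 1) - f (update u j 0)) := by
        gcongr; nlinarith

/-- For `f : [0,1]^ℕ → [0,1]` coordinate-wise nondecreasing and measurable, the squared
`L²`-influences of the binary digits of coordinate `j` satisfy
`∑_{i≥1} E((Δ_{i,j}^∞ f)²) ≤ (1/2)·E[f(X^∞|y_j=1) - f(X^∞|y_j=0)]`,
using `E((Δ_{i,j}^∞ f)²) = (1/4)·E[(f(X^∞|x_{i,j}=1) - f(X^∞|x_{i,j}=0))²]`. -/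
theorem digit_influences_L2_bound
    (μ : Measure (ℕ → ℝ)) [IsProbabilityMeasure μ]
    (hindep : iIndepFun (fun j (x : ℕ → ℝ) => x j) μ)
    (hmarg : ∀ j, μ.map (fun x => x j) = (volume : Measure ℝ).restrict (Set.Icc (0 : ℝ) 1))
    (f : (ℕ → ℝ) → ℝ) (hfmeas : Measurable f)
    (hrange : ∀ x, f x ∈ Set.Icc (0 : ℝ) 1)
    (hmono : ∀ x y : ℕ → ℝ, (∀ j, x j ∈ Set.Icc (0 : ℝ) 1) → (∀ j, y j ∈ Set.Icc (0 : ℝ) 1) →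
      x ≤ y → f x ≤ f y)
    (j : ℕ) :
    (∑' i : ℕ, (1 / 4) *
        ∫ u, (f (Function.update u j (setBinDigit (i + 1) 1 (u j)))
              - f (Function.update u j (setBinDigit (i + 1) 0 (u j)))) ^ 2 ∂μ)
      ≤ (1 / 2) * ∫ u, (f (Function.update u j 1) - f (Function.update u j 0)) ∂μ := by
  set R := ∫ u, (f (update u j 1) - f (update u j 0)) ∂μ
  have hae : ∀ᵐ u ∂μ, u ∈ univ.pi fun _ => Icc (0 : ℝ) 1 := by
    simp only [mem_univ_pi, ae_all_iff]
    exact fun k => ae_of_ae_map (measurable_pi_apply k).aemeasurable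
      (by rw [hmarg k]; exact ae_restrict_mem measurableSet_Icc)
  have hmono' : MonotoneOn f (univ.pi fun _ => Icc 0 1) := fun x hx y hy =>
    hmono x y (mem_univ_pi.1 hx) (mem_univ_pi.1 hy)
  have hterm : ∀ i : ℕ, (1 / 4) * ∫ u, (f (update u j (setBinDigit (i + 1) 1 (u j)))
      - f (update u j (setBinDigit (i + 1) 0 (u j)))) ^ 2 ∂μ ≤ R / 4 * (1 / 2) ^ i := fun i => by
    have := integral_sq_update_setBinDigit_sub_le hindep (hmarg j) hae hfmeas hrange hmono'
      i.succ_ne_zero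
    calc _ ≤ 1 / 4 * (2 * (2 ^ (i + 1))⁻¹ * R) := by gcongr
      _ = R / 4 * (1 / 2) ^ i := by rw [pow_succ, one_div_pow]; field_simp
  have hnonneg : ∀ i : ℕ, 0 ≤ (1 / 4 : ℝ) * ∫ u, (f (update u j (setBinDigit (i + 1) 1 (u j)))
      - f (update u j (setBinDigit (i + 1) 0 (u j)))) ^ 2 ∂μ :=
    fun i => mul_nonneg (by norm_num) (integral_nonneg fun u => sq_nonneg _)
  have hgeom : Summable fun i : ℕ => R / 4 * (1 / 2 : ℝ) ^ i := summable_geometric_two.mul_left _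
  calc _ ≤ ∑' i : ℕ, R / 4 * (1 / 2 : ℝ) ^ i :=
        Summable.tsum_le_tsum hterm (hgeom.of_nonneg_of_le hnonneg hterm) hgeom
    _ = 1 / 2 * R := by rw [tsum_mul_left, tsum_geometric_two]; ring
end

section
/- Let V > 0, γ ∈ (0,1), and I > 0 satisfy I ≥ V·log( V / (γ·I) ). Then I ≥ V·log( 1 / max(γ, γ·log(1/γ)) ). -/
/-- Self-improvement step: if `V > 0`, `γ ∈ (0,1)`, `I > 0` and `I ≥ V·log(V/(γI))`,
then `I ≥ V·log(1/max(γ, γ·log(1/γ)))`. -/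
theorem log_self_improvement (V γ I : ℝ) (hV : 0 < V) (hγ : γ ∈ Set.Ioo (0 : ℝ) 1)
    (hI : 0 < I) (h : V * Real.log (V / (γ * I)) ≤ I) :
    V * Real.log (1 / max γ (γ * Real.log (1 / γ))) ≤ I := by
  obtain ⟨hγ0, hγ1⟩ := hγ
  have hL : 0 < Real.log (1 / γ) := by
    rw [Real.log_div one_ne_zero (ne_of_gt hγ0), Real.log_one]
    simpa using Real.log_neg hγ0 hγ1
  have hmaxpos : 0 < max γ (γ * Real.log (1 / γ)) := lt_max_of_lt_left hγ0
  by_cases hc : I ≤ V * Real.log (1 / γ)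
  · -- substitute I ≤ V L into the RHS of h
    have hVγI : 1 / (γ * Real.log (1 / γ)) ≤ V / (γ * I) := by
      rw [div_le_div_iff₀ (by positivity) (by positivity)]
      calc 1 * (γ * I) = γ * I := by ring
        _ ≤ γ * (V * Real.log (1 / γ)) := by
            exact mul_le_mul_of_nonneg_left hc hγ0.le
        _ = V * (γ * Real.log (1 / γ)) := by ring
    have hlog : Real.log (1 / (γ * Real.log (1 / γ))) ≤ Real.log (V / (γ * I)) :=
      Real.log_le_log (by positivity) hVγI
    have hmax : Real.log (1 / max γ (γ * Real.log (1 / γ))) ≤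
        Real.log (1 / (γ * Real.log (1 / γ))) := by
      apply Real.log_le_log (by positivity)
      apply one_div_le_one_div_of_le (by positivity) (le_max_right _ _)
    calc V * Real.log (1 / max γ (γ * Real.log (1 / γ)))
        ≤ V * Real.log (V / (γ * I)) := by
          exact mul_le_mul_of_nonneg_left (hmax.trans hlog) hV.le
      _ ≤ I := h
  · push_neg at hc
    have hmax : Real.log (1 / max γ (γ * Real.log (1 / γ))) ≤ Real.log (1 / γ) := by
      apply Real.log_le_log (by positivity)
      apply one_div_le_one_div_of_le hγ0 (le_max_left _ _)
    calc V * Real.log (1 / max γ (γ * Real.log (1 / γ)))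
        ≤ V * Real.log (1 / γ) := mul_le_mul_of_nonneg_left hmax hV.le
      _ ≤ I := hc.le
end

section
/- Let (μ_t)_{t∈I} be a family of probability measures on {1,…,r} such that t ↦ μ_t({k}) is differentiable for each k, and let A be an increasing event in {1,…,r}^n depending on finitely many coordinates, with f = 1_A and ν_t = μ_t^{⊗n}. If S_t^* := min_{2≤k≤r} d/dt μ_t({k,…,r}) ≥ 0, then d/dt ν_t(A) ≥ S_t^* · Σ_{j=1}^n ∫ [f(x | x_j = r) − f(x | x_j = 1)] dν_t(x). -/
/-!
By the product rule, `d/dt ν_t(f) = ∑_j ∑_k μ'(k) · ∫ f(x | x_j = k) dν_t`: in the `j`-th term the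
`j`-th coordinate is integrated out, which uses that `μ_t` is a probability vector. For increasing
`f` the numbers `b_k = ∫ f(x | x_j = k) dν_t` increase in `k`, and since `∑_k μ'(k) = 0`, Abel
summation turns `∑_k μ'(k) b_k` into `∑_{k ≥ 2} (b_k - b_{k-1}) · μ'({k,…,r}) ≥ S* · (b_r - b_1)`.
-/

open Finset Function

theorem Finset.mul_sub_le_sum_range_mul_of_le_tail_sum {a b : ℕ → ℝ} {S : ℝ} {r : ℕ}
    (ha : ∑ i ∈ range r, a i = 0) (hb : ∀ i, i + 1 < r → b i ≤ b (i + 1))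
    (hS : ∀ m, 1 ≤ m → m < r → S ≤ ∑ i ∈ Ico m r, a i) :
    S * (b (r - 1) - b 0) ≤ ∑ i ∈ range r, b i * a i := by
  have hprefix : ∀ m ≤ r, ∑ i ∈ Ico m r, a i = -∑ i ∈ range m, a i := fun m hm => by
    linarith [sum_range_add_sum_Ico a hm]
  calc S * (b (r - 1) - b 0) = ∑ i ∈ range (r - 1), (b (i + 1) - b i) * S := by
        rw [← sum_mul, sum_range_sub, mul_comm]
    _ ≤ ∑ i ∈ range (r - 1), (b (i + 1) - b i) * -∑ j ∈ range (i + 1), a j := by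
        refine sum_le_sum fun i hi => ?_
        rw [mem_range] at hi
        rw [← hprefix _ (by omega)]
        exact mul_le_mul_of_nonneg_left (hS _ le_add_self (by omega))
          (sub_nonneg.2 (hb i (by omega)))
    _ = ∑ i ∈ range r, b i * a i := by
        simp only [← smul_eq_mul, sum_range_by_parts b a r, ha, smul_zero, zero_sub, smul_neg,
          sum_neg_distrib]

theorem Fin.mul_sub_le_sum_mul_of_le_tail_sum {r : ℕ} (hr : 0 < r) {a b : Fin r → ℝ} {S : ℝ}
    (ha : ∑ k, a k = 0) (hb : Monotone b)
    (hS : ∀ k : Fin r, 1 ≤ k.1 → S ≤ ∑ l ∈ univ.filter (fun l => k ≤ l), a l) :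
    S * (b ⟨r - 1, by omega⟩ - b ⟨0, hr⟩) ≤ ∑ k, b k * a k := by
  let extend : (Fin r → ℝ) → ℕ → ℝ := fun g i => if h : i < r then g ⟨i, h⟩ else 0
  have hext : ∀ g (k : Fin r), extend g k = g k := fun g k => dif_pos k.isLt
  have htail : ∀ k : Fin r,
      ∑ l ∈ univ.filter (fun l => k ≤ l), a l = ∑ i ∈ Ico k.1 r, extend a i := by
    intro k
    rw [filter_le_eq_Ici, ← Fin.map_valEmbedding_Ici, sum_map]
    simp only [Fin.valEmbedding_apply, hext]
  have key := Finset.mul_sub_le_sum_range_mul_of_le_tail_sum (a := extend a) (b := extend b)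
    (r := r)
    (by simpa only [← Fin.sum_univ_eq_sum_range, hext] using ha)
    (fun i hi => by
      simp only [extend, dif_pos hi, dif_pos (by omega : i < r)]
      exact hb (Fin.mk_le_mk.2 (by omega)))
    (fun m hm1 hmr => by simpa only [htail] using hS ⟨m, hmr⟩ hm1)
  have htop : extend b (r - 1) = b ⟨r - 1, by omega⟩ := hext b ⟨r - 1, by omega⟩
  have hbot : extend b 0 = b ⟨0, hr⟩ := hext b ⟨0, hr⟩
  rw [htop, hbot, ← Fin.sum_univ_eq_sum_range (fun i => extend b i * extend a i)] at key
  simpa only [hext] using key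

section

variable {ι α : Type*} [Fintype ι] [DecidableEq ι] [Fintype α]

/-- `∫ f d(w^{⊗ι})` when `w` is a probability vector on `α`. -/
def prodMean (w : α → ℝ) (f : (ι → α) → ℝ) : ℝ := ∑ x, f x * ∏ i, w (x i)

theorem sum_sum_update_swap {M : Type*} [AddCommMonoid M] (j : ι) (H : (ι → α) → α → M) :
    ∑ x, ∑ k, H (update x j k) (x j) = ∑ x, ∑ k, H x k := by
  have hσ : Involutive fun p : (ι → α) × α => (update p.1 j p.2, p.1 j) := fun p => by simp
  simp only [← Fintype.sum_prod_type']
  exact Equiv.sum_comp (hσ.toPerm _) (uncurry H)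

theorem sum_mul_prod_erase_mul_eq {w : α → ℝ} (hw : ∑ k, w k = 1) (f : (ι → α) → ℝ) (j : ι)
    (v : α → ℝ) :
    ∑ x, f x * ((∏ i ∈ univ.erase j, w (x i)) * v (x j))
      = ∑ k, v k * prodMean w (fun x => f (update x j k)) := by
  set P : (ι → α) → ℝ := fun x => ∏ i ∈ univ.erase j, w (x i)
  have hP : ∀ x k, P (update x j k) = P x := fun x k => by
    simp only [P, ← comp_apply (f := w), comp_update]
    exact prod_update_of_notMem (notMem_erase j univ) _ _
  calc ∑ x, f x * (P x * v (x j))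
      = ∑ x, ∑ k, v (x j) * f x * P x * w k := by
        simp only [← mul_sum, hw]; congr! 1 with x; ring
    _ = ∑ x, ∑ k, v (update x j k j) * f (update x j k) * P (update x j k) * w (x j) :=
        (sum_sum_update_swap j fun y m => v (y j) * f y * P y * w m).symm
    _ = ∑ k, v k * prodMean w (fun x => f (update x j k)) := by
        simp only [prodMean, mul_sum, hP, update_self]
        rw [sum_comm]
        refine sum_congr rfl fun k _ => sum_congr rfl fun x _ => ?_
        rw [← mul_prod_erase univ (fun i => w (x i)) (mem_univ j)]
        ring

theorem hasDerivAt_prodMean {μ : ℝ → α → ℝ} {μ' : α → ℝ} {t₀ : ℝ} (f : (ι → α) → ℝ)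
    (hμ : ∀ k, HasDerivAt (fun t => μ t k) (μ' k) t₀) (hprob : ∑ k, μ t₀ k = 1) :
    HasDerivAt (fun t => prodMean (μ t) f)
      (∑ j, ∑ k, μ' k * prodMean (μ t₀) (fun x => f (update x j k))) t₀ := by
  have hprod : ∀ x : ι → α, HasDerivAt (fun t => ∏ i, μ t (x i))
      (∑ j, (∏ i ∈ univ.erase j, μ t₀ (x i)) * μ' (x j)) t₀ := fun x => by
    simpa only [smul_eq_mul] using HasDerivAt.fun_finsetProd fun i _ => hμ (x i)
  have hmean : HasDerivAt (fun t => prodMean (μ t) f)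
      (∑ x, f x * ∑ j, (∏ i ∈ univ.erase j, μ t₀ (x i)) * μ' (x j)) t₀ :=
    HasDerivAt.fun_sum fun x _ => (hprod x).const_mul (f x)
  refine hmean.congr_deriv ?_
  rw [← sum_congr rfl fun j _ => sum_mul_prod_erase_mul_eq hprob f j μ']
  simp only [mul_sum]
  exact sum_comm

theorem monotone_prodMean_update [Preorder α] {w : α → ℝ} (hw : ∀ k, 0 ≤ w k)
    {f : (ι → α) → ℝ} (hf : Monotone f) (j : ι) :
    Monotone fun k => prodMean w (fun x => f (update x j k)) :=
  fun _ _ hkk' => sum_le_sum fun x _ =>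
    mul_le_mul_of_nonneg_right (hf (update_mono hkk')) (prod_nonneg fun i _ => hw (x i))

end

theorem IsUpperSet.monotone_indicator_one {β : Type*} [Preorder β] {A : Set β}
    (hA : IsUpperSet A) : Monotone (A.indicator fun _ => (1 : ℝ)) := by
  intro x y hxy
  by_cases hx : x ∈ A
  · simp [hx, hA hxy hx]
  · simp [hx, Set.indicator_nonneg]

theorem sum_deriv_eq_zero_of_sum_eq_one {α : Type*} [Fintype α] {μ : ℝ → α → ℝ} {μ' : α → ℝ}
    {t₀ : ℝ} (hμ : ∀ k, HasDerivAt (fun t => μ t k) (μ' k) t₀) (hprob : ∀ t, ∑ k, μ t k = 1) :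
    ∑ k, μ' k = 0 :=
  (HasDerivAt.fun_sum fun k _ => hμ k).unique (by simpa only [hprob] using hasDerivAt_const t₀ 1)

/-- Generalized Russo formula (inequality (2) of the paper) on `{1,…,r}^n` (encoded as
`Fin n → Fin r`): for an increasing event `A` depending on finitely many coordinates,
if each `t ↦ μ_t({k})` is differentiable at `t₀` with derivative `μ'(k)`, the family
`(μ_t)` consists of probability measures, and `S* ≥ 0` is a lower bound for the tail
derivatives `d/dt μ_t({k,…,r}) = ∑_{l≥k} μ'(l)` for `k ≥ 2`, then
`d/dt ν_t(A)|_{t=t₀} ≥ S*·∑_j ∫ (1_A(x|x_j=r) - 1_A(x|x_j=1)) dν_{t₀}(x)`. -/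
theorem generalized_russo_formula
    (n r : ℕ) (hr : 2 ≤ r)
    (μ : ℝ → Fin r → ℝ) (μ' : Fin r → ℝ) (t₀ : ℝ)
    (hpos : ∀ t k, 0 ≤ μ t k) (hprob : ∀ t, ∑ k, μ t k = 1)
    (hderiv : ∀ k, HasDerivAt (fun t => μ t k) (μ' k) t₀)
    (A : Set (Fin n → Fin r))
    (hA : ∀ x y : Fin n → Fin r, x ≤ y → x ∈ A → y ∈ A)
    (Sstar : ℝ)
    (hSstar : ∀ k : Fin r, 1 ≤ k.1 →
      Sstar ≤ ∑ l ∈ Finset.univ.filter (fun l : Fin r => k ≤ l), μ' l) :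
    Sstar * ∑ j : Fin n, ∑ x : Fin n → Fin r,
        (A.indicator (fun _ => (1 : ℝ)) (Function.update x j ⟨r - 1, by omega⟩)
          - A.indicator (fun _ => (1 : ℝ)) (Function.update x j ⟨0, by omega⟩))
          * ∏ j' : Fin n, μ t₀ (x j')
      ≤ deriv (fun t => ∑ x : Fin n → Fin r,
          A.indicator (fun _ => (1 : ℝ)) x * ∏ j' : Fin n, μ t (x j')) t₀ := by
  set f := A.indicator fun _ => (1 : ℝ)
  have hf : Monotone f := IsUpperSet.monotone_indicator_one fun _ _ => hA _ _
  change _ ≤ deriv (fun t => prodMean (μ t) f) t₀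
  rw [(hasDerivAt_prodMean f hderiv (hprob t₀)).deriv, mul_sum]
  refine sum_le_sum fun j _ => ?_
  calc _ = Sstar * (prodMean (μ t₀) (fun x => f (update x j ⟨r - 1, by omega⟩))
        - prodMean (μ t₀) (fun x => f (update x j ⟨0, by omega⟩))) := by
        simp only [prodMean, sub_mul, sum_sub_distrib]
    _ ≤ ∑ k, prodMean (μ t₀) (fun x => f (update x j k)) * μ' k :=
        Fin.mul_sub_le_sum_mul_of_le_tail_sum (by omega)
          (sum_deriv_eq_zero_of_sum_eq_one hderiv hprob) (monotone_prodMean_update (hpos t₀) hf j)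
          hSstar
    _ = _ := sum_congr rfl fun k _ => mul_comm _ _
end
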